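/- Let a > 0, Omega open connected subset of (0,infinity) x R^k, and u in C^3(Omega) with L_a u = -1. If L_a P_a = 0 in Omega, where P_a = |grad u|^2 + (2/(a+1+k)) u, then there exist y_0 in R^k and gamma in R such that u(r,y) = gamma - (r^2 + |y - y_0|^2)/(2(a+1+k)) for all (r,y) in Omega. -/

import Mathlib

open Set Finset

/-- Partial derivative of `u` in the `i`-th coordinate direction. -/
noncomputable def pd {n : ℕ} (i : Fin n) (u : (Fin n → ℝ) → ℝ) (x : Fin n → ℝ) : ℝ :=
  fderiv ℝ u x (Pi.single i 1)

/-- The Weinstein operator `L_a u = ∂_rr u + (a/r) ∂_r u + Δ_y u` on `ℝ^+ × ℝ^k`,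
where `r = x 0` and `y = (x 1, …, x k)`. -/
noncomputable def weinstein {k : ℕ} (a : ℝ) (u : (Fin (k + 1) → ℝ) → ℝ)
    (x : Fin (k + 1) → ℝ) : ℝ :=
  (∑ i, pd i (pd i u) x) + (a / x 0) * pd 0 u x

/-!
Differentiating `L_a u = -1` gives `L_a (∂_m u) = δ_{m0} (a / r²) ∂_r u`, and a Bochner-type
computation then turns `L_a P_a = 0` into `|D²u|² + a q² = 1/s`, where `q = ∂_r u / r` and
`s = a + 1 + k`. Since the equation itself says `tr D²u + a q = -1`,
`∑ (D²u + I/s)² + a (q + 1/s)² = |D²u|² + a q² - 1/s = 0`: this is the equality case of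
Cauchy–Schwarz, so `D²u = -I/s` and `∂_r u = -r/s`. On a connected set `u` is therefore the
paraboloid `γ - |x - p|²/(2s)`, and `∂_r u = -r/s` places its centre `p` on `r = 0`.
-/

open Filter Topology

section PartialDeriv

variable {n m : ℕ} {f g : (Fin n → ℝ) → ℝ} {F : Fin m → (Fin n → ℝ) → ℝ}
  {x : Fin n → ℝ} {i j : Fin n}

theorem HasFDerivAt.pd_eq {f' : (Fin n → ℝ) →L[ℝ] ℝ} (hf : HasFDerivAt f f' x) :
    pd i f x = f' (Pi.single i 1) := by
  rw [pd, hf.fderiv]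

theorem Filter.EventuallyEq.pd_eq (h : f =ᶠ[𝓝 x] g) : pd i f x = pd i g x := by
  rw [pd, pd, h.fderiv_eq]

theorem pd_const (c : ℝ) : pd i (fun _ => c) x = 0 := by
  simp [pd]

theorem pd_coord : pd i (fun z => z j) x = if i = j then 1 else 0 := by
  rw [(hasFDerivAt_apply j x).pd_eq]
  simp [Pi.single_apply, eq_comm]

theorem pd_add (hf : DifferentiableAt ℝ f x) (hg : DifferentiableAt ℝ g x) :
    pd i (fun z => f z + g z) x = pd i f x + pd i g x :=
  (hf.hasFDerivAt.add hg.hasFDerivAt).pd_eq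

theorem pd_sub_const (c : ℝ) : pd i (fun z => f z - c) x = pd i f x := by
  rw [pd, fderiv_sub_const, pd]

theorem pd_const_mul (c : ℝ) (hf : DifferentiableAt ℝ f x) :
    pd i (fun z => c * f z) x = c * pd i f x :=
  (hf.hasFDerivAt.const_mul c).pd_eq

theorem pd_mul (hf : DifferentiableAt ℝ f x) (hg : DifferentiableAt ℝ g x) :
    pd i (fun z => f z * g z) x = pd i f x * g x + f x * pd i g x := by
  refine (hf.hasFDerivAt.mul hg.hasFDerivAt).pd_eq.trans ?_
  simp only [add_apply, smul_apply, smul_eq_mul, pd]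
  ring

theorem pd_sq (hf : DifferentiableAt ℝ f x) :
    pd i (fun z => f z ^ 2) x = 2 * f x * pd i f x := by
  simp only [sq]
  rw [pd_mul hf hf]
  ring

theorem pd_sum (hF : ∀ l, DifferentiableAt ℝ (F l) x) :
    pd i (fun z => ∑ l, F l z) x = ∑ l, pd i (F l) x :=
  (HasFDerivAt.fun_sum fun l _ => (hF l).hasFDerivAt).pd_eq.trans (by simp [pd])

theorem pd_comp {φ : ℝ → ℝ} {φ' : ℝ} (hφ : HasDerivAt φ φ' (f x))
    (hf : DifferentiableAt ℝ f x) : pd i (fun z => φ (f z)) x = φ' * pd i f x :=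
  (hφ.comp_hasFDerivAt x hf.hasFDerivAt).pd_eq

theorem pd_sum_sq_sub (p : Fin n → ℝ) :
    pd i (fun z => ∑ j, (z j - p j) ^ 2) x = 2 * (x i - p i) := by
  have hd : ∀ j, DifferentiableAt ℝ (fun z : Fin n → ℝ => z j - p j) x :=
    fun j => by fun_prop
  rw [pd_sum fun j => (hd j).fun_pow 2]
  simp [pd_sq (hd _), pd_sub_const, pd_coord]

theorem ContDiffAt.pd {m k : WithTop ℕ∞} (hf : ContDiffAt ℝ k f x) (hmk : m + 1 ≤ k) :
    ContDiffAt ℝ m (pd i f) x :=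
  (hf.fderiv_right hmk).clm_apply contDiffAt_const

theorem pd_pd_comm (hf : ContDiffAt ℝ 2 f x) : pd i (pd j f) x = pd j (pd i f) x := by
  have hd : DifferentiableAt ℝ (fderiv ℝ f) x :=
    (hf.fderiv_right (m := 1) le_rfl).differentiableAt one_ne_zero
  have hsnd : ∀ l m, pd l (pd m f) x =
      fderiv ℝ (fderiv ℝ f) x (Pi.single l 1) (Pi.single m 1) :=
    fun l m => (hd.hasFDerivAt.clm_apply (hasFDerivAt_const _ x)).pd_eq.trans (by simp)
  rw [hsnd, hsnd, (hf.isSymmSndFDerivAt (by simp)).eq]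

theorem IsOpen.exists_const_of_pd_eq_zero {s : Set (Fin n → ℝ)} (hs : IsOpen s)
    (hs' : IsPreconnected s) (hf : ∀ z ∈ s, DifferentiableAt ℝ f z)
    (h : ∀ z ∈ s, ∀ i, pd i f z = 0) : ∃ c, ∀ z ∈ s, f z = c := by
  refine hs.exists_is_const_of_fderiv_eq_zero hs' (fun z hz => (hf z hz).differentiableWithinAt)
    fun z hz => ?_
  refine ContinuousLinearMap.coe_injective (LinearMap.pi_ext fun l t => ?_)
  have hsingle : (Pi.single l t : Fin n → ℝ) = t • Pi.single l 1 := by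
    ext m
    simp [Pi.single_apply]
  have hl : fderiv ℝ f z (Pi.single l 1) = 0 := h z hz l
  simp [hsingle, hl]

theorem pd_sum_sq (hF : ∀ l, DifferentiableAt ℝ (F l) x) :
    pd i (fun z => ∑ l, F l z ^ 2) x = 2 * ∑ l, F l x * pd i (F l) x := by
  rw [pd_sum fun l => (hF l).fun_pow 2, Finset.mul_sum]
  exact Finset.sum_congr rfl fun l _ => by rw [pd_sq (hF l)]; ring

theorem pd_pd_sum_sq (hF : ∀ l, ContDiffAt ℝ 2 (F l) x) :
    pd i (pd j (fun z => ∑ l, F l z ^ 2)) x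
      = 2 * ∑ l, (pd i (F l) x * pd j (F l) x + F l x * pd i (pd j (F l)) x) := by
  have hd : ∀ l, DifferentiableAt ℝ (F l) x := fun l => (hF l).differentiableAt (by simp)
  have hd' : ∀ l, DifferentiableAt ℝ (pd j (F l)) x :=
    fun l => ((hF l).pd (m := 1) le_rfl).differentiableAt one_ne_zero
  have hnear : pd j (fun z => ∑ l, F l z ^ 2) =ᶠ[𝓝 x]
      fun z => 2 * ∑ l, F l z * pd j (F l) z := by
    filter_upwards [eventually_all.2 fun l => (hF l).eventually (by simp)] with z hz
    exact pd_sum_sq fun l => (hz l).differentiableAt (by simp)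
  rw [hnear.pd_eq, pd_const_mul _ (DifferentiableAt.fun_sum fun l _ => (hd l).fun_mul (hd' l)),
    pd_sum fun l => (hd l).fun_mul (hd' l)]
  simp only [pd_mul (hd _) (hd' _)]

theorem pd_pd_add_const_mul (c : ℝ) (hf : ContDiffAt ℝ 2 f x) (hg : ContDiffAt ℝ 2 g x) :
    pd i (pd j (fun z => f z + c * g z)) x = pd i (pd j f) x + c * pd i (pd j g) x := by
  have hnear : pd j (fun z => f z + c * g z) =ᶠ[𝓝 x] fun z => pd j f z + c * pd j g z := by
    filter_upwards [hf.eventually (by simp), hg.eventually (by simp)] with z hfz hgz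
    rw [pd_add (hfz.differentiableAt (by simp)) ((hgz.differentiableAt (by simp)).const_mul c),
      pd_const_mul c (hgz.differentiableAt (by simp))]
  have hf' := (hf.pd (i := j) (m := 1) le_rfl).differentiableAt one_ne_zero
  have hg' := (hg.pd (i := j) (m := 1) le_rfl).differentiableAt one_ne_zero
  rw [hnear.pd_eq, pd_add hf' (hg'.const_mul c), pd_const_mul c hg']

end PartialDeriv

section Weinstein

variable {k : ℕ} {a : ℝ} {f g u : (Fin (k + 1) → ℝ) → ℝ} {x : Fin (k + 1) → ℝ}

theorem weinstein_add_const_mul (c : ℝ) (hf : ContDiffAt ℝ 2 f x) (hg : ContDiffAt ℝ 2 g x) :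
    weinstein a (fun z => f z + c * g z) x = weinstein a f x + c * weinstein a g x := by
  have hf' := hf.differentiableAt (by simp)
  have hg' := hg.differentiableAt (by simp)
  simp only [weinstein, pd_pd_add_const_mul c hf hg, pd_add hf' (hg'.const_mul c),
    pd_const_mul c hg', Finset.sum_add_distrib]
  rw [← Finset.mul_sum]
  ring

theorem weinstein_sum_sq_pd (hu : ContDiffAt ℝ 3 u x) :
    weinstein a (fun z => ∑ j, pd j u z ^ 2) x
      = 2 * ∑ i, ∑ j, pd i (pd j u) x ^ 2 + 2 * ∑ j, pd j u x * weinstein a (pd j u) x := by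
  have hv : ∀ j, ContDiffAt ℝ 2 (pd j u) x := fun j => hu.pd le_rfl
  simp only [weinstein, pd_pd_sum_sq hv, pd_sum_sq fun j => (hv j).differentiableAt (by simp)]
  simp only [mul_add, Finset.sum_add_distrib, Finset.mul_sum, sq]
  rw [Finset.sum_comm (f := fun i j => 2 * (pd j u x * pd i (pd i (pd j u)) x))]
  ring_nf

theorem weinstein_pd_of_eventuallyEq_const (hu : ContDiffAt ℝ 3 u x) (hx : x 0 ≠ 0) {c : ℝ}
    (hL : weinstein a u =ᶠ[𝓝 x] fun _ => c) (m : Fin (k + 1)) :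
    weinstein a (pd m u) x = if m = 0 then a / x 0 ^ 2 * pd 0 u x else 0 := by
  have hv : ∀ j, ContDiffAt ℝ 2 (pd j u) x := fun j => hu.pd le_rfl
  have hv' : ∀ j, DifferentiableAt ℝ (pd j u) x := fun j => (hv j).differentiableAt (by simp)
  have hw : ∀ i j, DifferentiableAt ℝ (pd i (pd j u)) x :=
    fun i j => ((hv j).pd (m := 1) le_rfl).differentiableAt one_ne_zero
  have hrecip : DifferentiableAt ℝ (fun z : Fin (k + 1) → ℝ => a / z 0) x := by
    fun_prop (disch := exact hx)
  have hcomm : ∀ i, pd m (pd i (pd i u)) x = pd i (pd i (pd m u)) x := by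
    intro i
    rw [pd_pd_comm (hv i)]
    apply Filter.EventuallyEq.pd_eq
    filter_upwards [hu.eventually (by simp)] with z hz
    exact pd_pd_comm (hz.of_le (by norm_num))
  have hrecip' : pd m (fun z => a / z 0) x = -(a / x 0 ^ 2) * if m = 0 then 1 else 0 := by
    have hφ : HasDerivAt (fun t => a / t) (-(a / x 0 ^ 2)) (x 0) := by
      simpa [div_eq_mul_inv] using (hasDerivAt_inv hx).const_mul a
    rw [pd_comp hφ (differentiableAt_apply 0 x), pd_coord, eq_comm]
  have hdiff : pd m (fun z => ∑ i, pd i (pd i u) z + a / z 0 * pd 0 u z) x = 0 :=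
    (hL.pd_eq (i := m)).trans (pd_const c)
  rw [pd_add (DifferentiableAt.fun_sum fun i _ => hw i i) (hrecip.fun_mul (hv' 0)),
    pd_sum fun i => hw i i, pd_mul hrecip (hv' 0), hrecip',
    pd_pd_comm (hu.of_le (by norm_num))] at hdiff
  simp only [hcomm] at hdiff
  unfold weinstein
  split_ifs at hdiff ⊢ with hm
  · subst hm; linear_combination hdiff
  · linear_combination hdiff

end Weinstein

theorem eq_neg_inv_diag_of_trace_of_sum_sq {n : ℕ} {a q : ℝ} (H : Fin n → Fin n → ℝ)
    (ha : 0 < a) (htr : ∑ i, H i i + a * q = -1)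
    (hsq : ∑ i, ∑ j, H i j ^ 2 + a * q ^ 2 = 1 / (n + a)) :
    (∀ i j, H i j = if i = j then -1 / (n + a) else 0) ∧ q = -1 / (n + a) := by
  obtain ⟨s, hs⟩ : ∃ s : ℝ, s = n + a := ⟨_, rfl⟩
  rw [← hs] at hsq ⊢
  have hs0 : s ≠ 0 := by rw [hs]; positivity
  set D : Fin n → Fin n → ℝ := fun i j => if i = j then 1 / s else 0
  have hzero : ∑ i, ∑ j, (H i j + D i j) ^ 2 + a * (q + 1 / s) ^ 2 = 0 := by
    have hexp : ∑ i, ∑ j, (H i j + D i j) ^ 2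
        = ∑ i, ∑ j, H i j ^ 2 + 2 / s * ∑ i, H i i + n / s ^ 2 := by
      simp only [D, one_div, add_sq, mul_ite, mul_zero, ite_pow, inv_pow, ne_eq,
        OfNat.ofNat_ne_zero, not_false_eq_true, zero_pow, sum_add_distrib, sum_ite_eq,
        Finset.mem_univ, if_true, sum_const, card_univ, Fintype.card_fin, nsmul_eq_mul, mul_sum]
      congr 2
      exact Finset.sum_congr rfl fun i _ => by ring
    calc _ = (n + a) / s ^ 2 - 1 / s := by rw [hexp]; linear_combination hsq + 2 / s * htr
      _ = 0 := by rw [← hs]; field_simp; ring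
  have hsq_nonneg : ∀ i j, 0 ≤ (H i j + D i j) ^ 2 := fun i j => sq_nonneg _
  have hrow_nonneg : ∀ i, 0 ≤ ∑ j, (H i j + D i j) ^ 2 :=
    fun i => Finset.sum_nonneg fun j _ => hsq_nonneg i j
  obtain ⟨hH, hq⟩ :=
    (add_eq_zero_iff_of_nonneg (Finset.sum_nonneg fun i _ => hrow_nonneg i) (by positivity)).1
      hzero
  refine ⟨fun i j => ?_, ?_⟩
  · have hrow := (Finset.sum_eq_zero_iff_of_nonneg fun i _ => hrow_nonneg i).1 hH i (mem_univ i)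
    have hij := (Finset.sum_eq_zero_iff_of_nonneg fun j _ => hsq_nonneg i j).1 hrow j (mem_univ j)
    have := pow_eq_zero_iff two_ne_zero |>.1 hij
    simp only [D] at this
    split_ifs at this ⊢ <;> linarith [neg_div s 1]
  · have := pow_eq_zero_iff two_ne_zero |>.1 ((mul_eq_zero.1 hq).resolve_left ha.ne')
    linarith [neg_div s 1]

theorem hessian_eq_of_weinstein_P_eq_zero {k : ℕ} {a : ℝ} {u : (Fin (k + 1) → ℝ) → ℝ}
    {x : Fin (k + 1) → ℝ} (ha : 0 < a) (hu : ContDiffAt ℝ 3 u x) (hx : x 0 ≠ 0)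
    (hL : weinstein a u =ᶠ[𝓝 x] fun _ => -1)
    (hP : weinstein a (fun z => ∑ i, pd i u z ^ 2 + 2 / (a + 1 + k) * u z) x = 0) :
    (∀ i j, pd i (pd j u) x = if i = j then -1 / (a + 1 + k) else 0) ∧
      pd 0 u x = -x 0 / (a + 1 + k) := by
  have hsum : ContDiffAt ℝ 2 (fun z => ∑ j, pd j u z ^ 2) x :=
    ContDiffAt.sum fun j _ => (hu.pd (i := j) le_rfl).pow 2
  have hLx : weinstein a u x = -1 := hL.eq_of_nhds
  rw [weinstein_add_const_mul _ hsum (hu.of_le (by norm_num)), weinstein_sum_sq_pd hu, hLx] at hP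
  simp only [weinstein_pd_of_eventuallyEq_const hu hx hL, mul_ite, mul_zero, Finset.sum_ite_eq',
    Finset.mem_univ, if_true] at hP
  have hs : ((k + 1 : ℕ) : ℝ) + a = a + 1 + k := by push_cast; ring
  obtain ⟨hH, hq⟩ := eq_neg_inv_diag_of_trace_of_sum_sq (n := k + 1) (q := pd 0 u x / x 0)
    (fun i j => pd i (pd j u) x) ha (by unfold weinstein at hLx; linear_combination hLx)
    (by rw [hs]; linear_combination hP / 2)
  rw [hs] at hH hq
  refine ⟨hH, ?_⟩
  rw [div_eq_iff hx] at hq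
  rw [hq]
  ring

section Quadratic

variable {n : ℕ} {s : ℝ} {Ω : Set (Fin n → ℝ)} {u : (Fin n → ℝ) → ℝ}

theorem IsOpen.exists_pd_eq_of_hessian_eq (hΩ : IsOpen Ω) (hΩ' : IsPreconnected Ω)
    (hs : s ≠ 0) (hu : ∀ x ∈ Ω, ContDiffAt ℝ 2 u x)
    (hH : ∀ x ∈ Ω, ∀ i j, pd i (pd j u) x = if i = j then -1 / s else 0) :
    ∃ p : Fin n → ℝ, ∀ x ∈ Ω, ∀ j, pd j u x = -(x j - p j) / s := by
  have hconst : ∀ j, ∃ c, ∀ x ∈ Ω, pd j u x + s⁻¹ * x j = c := by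
    intro j
    have hv : ∀ x ∈ Ω, DifferentiableAt ℝ (pd j u) x :=
      fun x hx => ((hu x hx).pd (m := 1) le_rfl).differentiableAt one_ne_zero
    refine hΩ.exists_const_of_pd_eq_zero hΩ' (fun x hx => (hv x hx).add (by fun_prop))
      fun x hx i => ?_
    rw [pd_add (hv x hx) (by fun_prop), pd_const_mul _ (differentiableAt_apply j x), pd_coord,
      hH x hx]
    split_ifs <;> ring
  choose c hc using hconst
  refine ⟨fun j => s * c j, fun x hx j => ?_⟩
  simp only [← hc j x hx]
  field_simp
  ring

theorem IsOpen.exists_eq_sub_sum_sq_of_pd_eq (hΩ : IsOpen Ω) (hΩ' : IsPreconnected Ω)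
    (hs : s ≠ 0) (hu : ∀ x ∈ Ω, DifferentiableAt ℝ u x) {p : Fin n → ℝ}
    (hgrad : ∀ x ∈ Ω, ∀ j, pd j u x = -(x j - p j) / s) :
    ∃ γ, ∀ x ∈ Ω, u x = γ - (∑ j, (x j - p j) ^ 2) / (2 * s) := by
  obtain ⟨γ, hγ⟩ := hΩ.exists_const_of_pd_eq_zero hΩ'
    (f := fun z => u z + (2 * s)⁻¹ * ∑ j, (z j - p j) ^ 2)
    (fun x hx => (hu x hx).add (by fun_prop))
    fun x hx i => by
      rw [pd_add (hu x hx) (by fun_prop), pd_const_mul _ (by fun_prop), pd_sum_sq_sub, hgrad x hx i]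
      field_simp
      ring
  exact ⟨γ, fun x hx => by rw [← hγ x hx]; ring⟩

end Quadratic

theorem stmt_7 (a : ℝ) (ha : 0 < a) (k : ℕ)
    (Ω : Set (Fin (k + 1) → ℝ)) (hΩopen : IsOpen Ω) (hΩconn : IsConnected Ω)
    (hΩ : Ω ⊆ {x : Fin (k + 1) → ℝ | 0 < x 0})
    (u : (Fin (k + 1) → ℝ) → ℝ) (hu : ContDiffOn ℝ 3 u Ω)
    (heq : ∀ x ∈ Ω, weinstein a u x = -1)
    (hP : ∀ x ∈ Ω,
      weinstein a (fun z => (∑ i, (pd i u z) ^ 2) + (2 / (a + 1 + k)) * u z) x = 0) :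
    ∃ (y₀ : Fin k → ℝ) (γ : ℝ), ∀ x ∈ Ω,
      u x = γ - ((x 0) ^ 2 + ∑ i : Fin k, (x i.succ - y₀ i) ^ 2) / (2 * (a + 1 + k)) := by
  have hs : a + 1 + (k : ℝ) ≠ 0 := by positivity
  have hCu : ∀ x ∈ Ω, ContDiffAt ℝ 3 u x := fun x hx => hu.contDiffAt (hΩopen.mem_nhds hx)
  have hrigid := fun x (hx : x ∈ Ω) =>
    hessian_eq_of_weinstein_P_eq_zero ha (hCu x hx) (hΩ hx).ne'
    (eventually_of_mem (hΩopen.mem_nhds hx) heq) (hP x hx)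
  obtain ⟨p, hp⟩ := hΩopen.exists_pd_eq_of_hessian_eq hΩconn.isPreconnected hs
    (fun x hx => (hCu x hx).of_le (by norm_num)) fun x hx => (hrigid x hx).1
  obtain ⟨γ, hγ⟩ := hΩopen.exists_eq_sub_sum_sq_of_pd_eq hΩconn.isPreconnected hs
    (fun x hx => (hCu x hx).differentiableAt (by simp)) hp
  have hp0 : p 0 = 0 := by
    obtain ⟨x₀, hx₀⟩ := hΩconn.nonempty
    have h := (hp x₀ hx₀ 0).symm.trans (hrigid x₀ hx₀).2
    field_simp at h
    linarith
  exact ⟨fun i => p i.succ, γ, fun x hx => by rw [hγ x hx, Fin.sum_univ_succ, hp0, sub_zero]⟩
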